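/- arXiv:1805.09809 — 3 statements merged into one kernel-verified Lean document; each statement's English description precedes it below -/
import Mathlib

section
/- Let λ = [a_1, ..., a_y] be a partition of n with all parts a_i ≥ 2 and a_1 ≥ 3, and let μ be the partition of n − 1 obtained by decreasing the last (smallest) part a_y by 1. Then D_n(λ) − D_{n−1}(μ) ≥ a_y + y − 2. -/
/-- The `i`-th part of the conjugate partition: number of parts ≥ i. -/
def conjPart (a : List ℕ) (i : ℕ) : ℕ := (a.filter (fun x => i ≤ x)).length

/-- `a` is a partition of `n`: weakly decreasing, positive parts, summing to `n`. -/
def IsPartitionOf (n : ℕ) (a : List ℕ) : Prop :=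
  List.Pairwise (· ≥ ·) a ∧ (∀ x ∈ a, 1 ≤ x) ∧ a.sum = n

/-- Half-dimension of the nilpotent GL_n orbit attached to the partition `a` of `n`:
`(n² − Σ_i (a'_i)²)/2`. -/
def Dhalf (n : ℕ) (a : List ℕ) : ℚ :=
  ((n : ℚ)^2 - ∑ i ∈ Finset.range n, (conjPart a (i+1) : ℚ)^2) / 2

/-!
Lowering the last part `c` of `λ` to `c - 1` changes only the `c`-th part of the conjugate
partition, from `k + 1` to `k`, where `k` counts the other parts that are `≥ c`. Hence
`D_n(λ) - D_{n-1}(μ) = ((2n - 1) - (2k + 1)) / 2 = n - k - 1`. As each of the other `y - 1` parts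
is at least `2`, `k + (y - 1) ≤ 2 (y - 1) ≤ n - c`, which is the claimed bound.
-/

open Finset

lemma conjPart_append_singleton (l : List ℕ) (c j : ℕ) :
    conjPart (l ++ [c]) j = conjPart l j + if j ≤ c then 1 else 0 := by
  simp only [conjPart, List.filter_append, List.length_append, List.filter_cons,
    List.filter_nil]
  split <;> simp_all

lemma conjPart_eq_zero_of_sum_lt {l : List ℕ} {j : ℕ} (hj : l.sum < j) : conjPart l j = 0 := by
  rw [conjPart, List.length_eq_zero_iff, List.filter_eq_nil_iff]
  intro x hx
  have : x ≤ l.sum := List.single_le_sum (fun y _ => Nat.zero_le y) x hx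
  simp only [decide_eq_true_eq]
  omega

lemma sum_range_sq_conjPart_eq_of_sum_le {l : List ℕ} {N M : ℕ} (hl : l.sum ≤ N)
    (hNM : N ≤ M) :
    ∑ i ∈ range N, (conjPart l (i + 1) : ℚ) ^ 2 = ∑ i ∈ range M, (conjPart l (i + 1) : ℚ) ^ 2 := by
  refine sum_subset (range_subset_range.2 hNM) fun i _ hi => ?_
  rw [mem_range, not_lt] at hi
  rw [conjPart_eq_zero_of_sum_lt (by omega)]
  norm_num

lemma sq_conjPart_append_sub_sq_conjPart_append_pred (l : List ℕ) {c : ℕ} (hc : 1 ≤ c)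
    (j : ℕ) :
    (conjPart (l ++ [c]) j : ℚ) ^ 2 - (conjPart (l ++ [c - 1]) j : ℚ) ^ 2
      = if j = c then 2 * (conjPart l c : ℚ) + 1 else 0 := by
  rw [conjPart_append_singleton, conjPart_append_singleton]
  by_cases hj : j = c
  · subst hj
    rw [if_pos le_rfl, if_neg (by omega), if_pos rfl]
    push_cast
    ring
  · have : (j ≤ c ↔ j ≤ c - 1) := by omega
    simp only [this, if_neg hj, sub_eq_zero]

lemma Dhalf_append_sub_Dhalf_append_pred (l : List ℕ) {c n : ℕ} (hc : 1 ≤ c)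
    (hn : l.sum + c = n) :
    Dhalf n (l ++ [c]) - Dhalf (n - 1) (l ++ [c - 1]) = n - conjPart l c - 1 := by
  have hsq : ∑ i ∈ range n, ((conjPart (l ++ [c]) (i + 1) : ℚ) ^ 2
      - (conjPart (l ++ [c - 1]) (i + 1) : ℚ) ^ 2) = 2 * conjPart l c + 1 := by
    have hidx : ∀ i, i + 1 = c ↔ i = c - 1 := by omega
    simp_rw [sq_conjPart_append_sub_sq_conjPart_append_pred l hc, hidx, sum_ite_eq', mem_range]
    exact if_pos (by omega)
  rw [sum_sub_distrib] at hsq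
  have hext := sum_range_sq_conjPart_eq_of_sum_le (l := l ++ [c - 1]) (N := n - 1) (M := n)
    (by simp only [List.sum_append, List.sum_singleton]; omega) (by omega)
  unfold Dhalf
  rw [hext, Nat.cast_sub (by omega : 1 ≤ n)]
  linear_combination (-1 / 2 : ℚ) * hsq

theorem stmt5_general (n : ℕ) (a : List ℕ) (h : IsPartitionOf n a) (hne : a ≠ [])
    (h2 : ∀ x ∈ a, 2 ≤ x) :
    (a.getLastD 0 : ℚ) + a.length - 2
      ≤ Dhalf n a - Dhalf (n - 1) (a.dropLast ++ [a.getLastD 0 - 1]) := by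
  obtain ⟨l, c, rfl⟩ := (List.eq_nil_or_concat' a).resolve_left hne
  have hc : 2 ≤ c := h2 c (by simp)
  have hsum : l.sum + c = n := by simpa using h.2.2
  have hbound : (conjPart l c : ℚ) + l.length + c ≤ n := by
    have hcount : conjPart l c ≤ l.length := List.length_filter_le _ _
    have htwo : l.length • 2 ≤ l.sum := List.card_nsmul_le_sum l 2 fun x hx => h2 x (by simp [hx])
    rw [smul_eq_mul] at htwo
    exact_mod_cast (by omega : conjPart l c + l.length + c ≤ n)
  rw [List.getLastD_concat, List.dropLast_concat,
    Dhalf_append_sub_Dhalf_append_pred l (by omega) hsum, List.length_append,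
    List.length_singleton]
  push_cast
  linarith

theorem stmt5 (n : ℕ) (a : List ℕ) (h : IsPartitionOf n a) (hne : a ≠ [])
    (h2 : ∀ x ∈ a, 2 ≤ x) (h3 : 3 ≤ a.headI) :
    (a.getLastD 0 : ℚ) + a.length - 2
      ≤ Dhalf n a - Dhalf (n - 1) (a.dropLast ++ [a.getLastD 0 - 1]) :=
  stmt5_general n a h hne h2
end

section
/- Let y ≥ 6 and let a_1 ≥ a_2 ≥ ... ≥ a_y ≥ 2 be integers with a_1 ≥ 3, and set n = 1 + Σ_{i=1}^{y} a_i. Define l = y − 3, s_2 = a_1 − 2, s_3 = a_1 + a_2, and s_i = a_1 + ... + a_{i−1} − 2i + 6 for 4 ≤ i ≤ l + 2. Then s_2 + s_3 + ... + s_{l+2} ≥ n, and in particular s_2 + ... + s_{l+2} > n − 2. -/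
theorem stmt7 (y : ℕ) (hy : 6 ≤ y) (a : ℕ → ℤ)
    (hmono : ∀ i j, 1 ≤ i → i ≤ j → j ≤ y → a j ≤ a i)
    (h2 : ∀ i, 1 ≤ i → i ≤ y → 2 ≤ a i)
    (h3 : 3 ≤ a 1)
    (n : ℤ) (hn : n = 1 + ∑ i ∈ Finset.Icc 1 y, a i)
    (l : ℕ) (hl : l = y - 3)
    (s : ℕ → ℤ) (hs2 : s 2 = a 1 - 2)
    (hsi : ∀ i, 3 ≤ i → i ≤ l + 2 →
      s i = (∑ j ∈ Finset.Icc 1 (i - 1), a j) - 2 * (i : ℤ) + 6) :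
    n ≤ ∑ i ∈ Finset.Icc 2 (l + 2), s i ∧ n - 2 < ∑ i ∈ Finset.Icc 2 (l + 2), s i := by
  have hly : l + 3 = y := by omega
  have ha2 : 2 ≤ a 2 := h2 2 (by norm_num) (by omega)
  have ha12 : a 2 ≤ a 1 := hmono 1 2 (by norm_num) (by norm_num) (by omega)
  -- per-term bound: s i ≥ a 1 + a 2
  have hterm : ∀ i ∈ Finset.Icc 3 (l + 2), a 1 + a 2 ≤ s i := by
    intro i hi
    simp only [Finset.mem_Icc] at hi
    obtain ⟨hi3, hil⟩ := hi
    rw [hsi i hi3 hil]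
    have hsplit : Finset.Icc 1 (i - 1) = Finset.Icc 1 2 ∪ Finset.Icc 3 (i - 1) :=
      Finset.ext fun x => by simp only [Finset.mem_Icc, Finset.mem_union]; omega
    have hdisj : Disjoint (Finset.Icc 1 2) (Finset.Icc 3 (i - 1)) := by
      simp only [Finset.disjoint_left, Finset.mem_Icc]; omega
    rw [hsplit, Finset.sum_union hdisj]
    have h12 : ∑ j ∈ Finset.Icc 1 2, a j = a 1 + a 2 := by
      rw [show Finset.Icc 1 2 = {1, 2} from rfl]
      simp
    have hrest : ((i : ℤ) - 3) * 2 ≤ ∑ j ∈ Finset.Icc 3 (i - 1), a j := by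
      have := Finset.card_nsmul_le_sum (Finset.Icc 3 (i - 1)) a 2
        (fun x hx => by
          simp only [Finset.mem_Icc] at hx
          exact h2 x (by omega) (by omega))
      have hcard : (Finset.Icc 3 (i - 1)).card = i - 3 := by
        rw [Nat.card_Icc]; omega
      rw [hcard, nsmul_eq_mul] at this
      have : ((i - 3 : ℕ) : ℤ) = (i : ℤ) - 3 := by omega
      linarith [Finset.card_nsmul_le_sum (Finset.Icc 3 (i - 1)) a 2
        (fun x hx => by
          simp only [Finset.mem_Icc] at hx
          exact h2 x (by omega) (by omega)), this,
        (by rw [Nat.card_Icc] : (Finset.Icc 3 (i-1)).card = (i-1)+1-3)]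
    rw [h12]
    have hc : ((Finset.Icc 3 (i - 1)).card : ℤ) = (i : ℤ) - 3 := by
      rw [Nat.card_Icc]; push_cast; omega
    have := Finset.card_nsmul_le_sum (Finset.Icc 3 (i - 1)) a 2
      (fun x hx => by
        simp only [Finset.mem_Icc] at hx
        exact h2 x (by omega) (by omega))
    rw [nsmul_eq_mul] at this
    rw [hc] at this
    linarith
  -- sum over Icc 3 (l+2)
  have hsum3 : (l : ℤ) * (a 1 + a 2) ≤ ∑ i ∈ Finset.Icc 3 (l + 2), s i := by
    have := Finset.sum_le_sum hterm
    have hc : ((Finset.Icc 3 (l + 2)).card : ℤ) = l := by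
      rw [Nat.card_Icc]; push_cast; omega
    rw [Finset.sum_const, nsmul_eq_mul] at this
    rw [hc] at this
    linarith
  -- split the total sum
  have hsplit2 : Finset.Icc 2 (l + 2) = insert 2 (Finset.Icc 3 (l + 2)) :=
    Finset.ext fun x => by simp only [Finset.mem_Icc, Finset.mem_insert]; omega
  have hnotmem : 2 ∉ Finset.Icc 3 (l + 2) := by simp
  have htot : s 2 + ∑ i ∈ Finset.Icc 3 (l + 2), s i = ∑ i ∈ Finset.Icc 2 (l + 2), s i := by
    rw [hsplit2, Finset.sum_insert hnotmem]
  -- bound on S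
  have hSbound : ∑ i ∈ Finset.Icc 1 y, a i ≤ a 1 + a 2 + ((y : ℤ) - 2) * a 2 := by
    have hsplit : Finset.Icc 1 y = Finset.Icc 1 2 ∪ Finset.Icc 3 y :=
      Finset.ext fun x => by simp only [Finset.mem_Icc, Finset.mem_union]; omega
    have hdisj : Disjoint (Finset.Icc 1 2) (Finset.Icc 3 y) := by
      simp only [Finset.disjoint_left, Finset.mem_Icc]; omega
    rw [hsplit, Finset.sum_union hdisj]
    have h12 : ∑ j ∈ Finset.Icc 1 2, a j = a 1 + a 2 := by
      rw [show Finset.Icc 1 2 = {1, 2} from rfl]; simp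
    have hub : ∑ j ∈ Finset.Icc 3 y, a j ≤ ((y : ℤ) - 2) * a 2 := by
      have := Finset.sum_le_sum (s := Finset.Icc 3 y) (f := a) (g := fun _ => a 2)
        (fun x hx => by
          simp only [Finset.mem_Icc] at hx
          exact hmono 2 x (by norm_num) (by omega) hx.2)
      rw [Finset.sum_const, nsmul_eq_mul] at this
      have hc : ((Finset.Icc 3 y).card : ℤ) = (y : ℤ) - 2 := by
        rw [Nat.card_Icc]; push_cast; omega
      rw [hc] at this
      linarith
    rw [h12]; linarith
  have hyZ : (6 : ℤ) ≤ (y : ℤ) := by exact_mod_cast hy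
  have hlZ : (l : ℤ) = (y : ℤ) - 3 := by omega
  have hmain : n ≤ ∑ i ∈ Finset.Icc 2 (l + 2), s i := by
    rw [← htot, hs2, hn]
    have h1 : (l : ℤ) * (a 1 + a 2) = ((y : ℤ) - 3) * (a 1 + a 2) := by rw [hlZ]
    nlinarith [hsum3, hSbound, mul_le_mul_of_nonneg_right (by linarith : (3:ℤ) ≤ (y:ℤ) - 3) (by linarith : (0:ℤ) ≤ a 1)]
  exact ⟨hmain, by linarith⟩
end

section
/- Let n ≥ 2 and k ≥ 3. Let a_1, ..., a_{k−1} be nontrivial partitions of n (i.e. none equal to [1^n]) and let a_k be any partition of n − 1 (possibly trivial). Write a_i = [a_{i,1}, a_{i,2}, ...] and assume Σ_{i,j} (a_{i,j} − 1) ≥ n − 1. Then Σ_{i=1}^{k} D(a_i) > n(n−1)/2, where D(a_i) is the half-dimension of the associated nilpotent orbit (in GL_n for i < k and in GL_{n−1} for i = k). -/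
/-! For a partition `a` of `m` with `ℓ` parts and excess `d = m - ℓ = Σ (a_j - 1)`, the conjugate
parts are at most `ℓ`, sum to `m`, and the first one is `ℓ`; hence `D(a) ≥ m d / 2` and `D(a) ≥ ℓ d`.
Let `s` be the total excess of `a_1, …, a_{k-1}`. If `s > n - 1`, the first bound alone suffices.
Otherwise `a_k` has excess at least `n - 1 - s`; applying the second bound to whichever of `a_1, a_2`
has the smaller excess `x ≤ s / 2` and the first bound to all the others leaves a slack of at least
`x / 2 > 0`. -/

open Finset

lemma conjPart_cons (x : ℕ) (a : List ℕ) (i : ℕ) :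
    conjPart (x :: a) i = (if i ≤ x then 1 else 0) + conjPart a i := by
  by_cases h : i ≤ x <;> simp [conjPart, h, Nat.add_comm]

lemma conjPart_one {a : List ℕ} (h : ∀ x ∈ a, 1 ≤ x) : conjPart a 1 = a.length := by
  rw [conjPart, List.filter_eq_self.2 (by simpa using h)]

lemma sum_range_conjPart {m : ℕ} {a : List ℕ} (h : ∀ x ∈ a, x ≤ m) :
    ∑ i ∈ range m, conjPart a (i + 1) = a.sum := by
  induction a with
  | nil => simp [conjPart]
  | cons x a ih =>
    have hx : (range m).filter (fun i => i + 1 ≤ x) = range x := by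
      ext i; simp only [mem_filter, mem_range]; have := h x (by simp); omega
    simp only [conjPart_cons, sum_add_distrib, ← sum_filter, hx,
      ih fun y hy => h y (by simp [hy])]
    simp

lemma length_lt_sum_of_ne_replicate {a : List ℕ} (h : ∀ x ∈ a, 1 ≤ x)
    (hne : a ≠ List.replicate a.length 1) : a.length < a.sum := by
  induction a with
  | nil => simp at hne
  | cons x a ih =>
    have hx := h x (by simp)
    have ha : ∀ y ∈ a, 1 ≤ y := fun y hy => h y (by simp [hy])
    have := List.length_le_sum_of_one_le a ha
    simp only [List.length_cons, List.sum_cons]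
    rcases Nat.lt_or_ge 1 x with hx1 | hx1
    · omega
    · have hne' : a ≠ List.replicate a.length 1 := by
        rintro hrep
        exact hne (by rw [List.length_cons, List.replicate_succ, ← hrep, show x = 1 by omega])
      have := ih ha hne'
      omega

namespace IsPartitionOf

variable {m : ℕ} {a : List ℕ}

lemma le_of_mem (h : IsPartitionOf m a) {x : ℕ} (hx : x ∈ a) : x ≤ m :=
  h.2.2 ▸ List.le_sum_of_mem hx

lemma length_le (h : IsPartitionOf m a) : a.length ≤ m :=
  h.2.2 ▸ List.length_le_sum_of_one_le a h.2.1

lemma length_lt (h : IsPartitionOf m a) (hne : a ≠ List.replicate m 1) : a.length < m := by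
  refine h.2.2 ▸ length_lt_sum_of_ne_replicate h.2.1 fun hrep => hne ?_
  have hlen : a.length = m := by rw [← h.2.2, hrep]; simp
  rwa [hlen] at hrep

lemma sum_range_conjPart (h : IsPartitionOf m a) :
    ∑ i ∈ range m, conjPart a (i + 1) = m :=
  (_root_.sum_range_conjPart fun _ hx => h.le_of_mem hx).trans h.2.2

lemma mul_sub_length_div_two_le_Dhalf (h : IsPartitionOf m a) :
    (m : ℚ) * (m - a.length) / 2 ≤ Dhalf m a := by
  have hsq : ∑ i ∈ range m, conjPart a (i + 1) ^ 2 ≤ a.length * m := by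
    calc ∑ i ∈ range m, conjPart a (i + 1) ^ 2
        ≤ ∑ i ∈ range m, a.length * conjPart a (i + 1) :=
          sum_le_sum fun i _ => by rw [sq]; gcongr; exact List.length_filter_le _ _
      _ = a.length * m := by rw [← mul_sum, h.sum_range_conjPart]
  have : ∑ i ∈ range m, (conjPart a (i + 1) : ℚ) ^ 2 ≤ a.length * m := by exact_mod_cast hsq
  rw [Dhalf]
  linarith

lemma length_mul_sub_length_le_Dhalf (h : IsPartitionOf m a) :
    (a.length : ℚ) * (m - a.length) ≤ Dhalf m a := by
  obtain _ | m := m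
  · simpa [Dhalf] using mul_self_nonneg (a.length : ℚ)
  set T := ∑ i ∈ range m, conjPart a (i + 2)
  have hsplit : T + a.length = m + 1 := by
    rw [← h.sum_range_conjPart, sum_range_succ', conjPart_one h.2.1]
  have hsq : ∑ i ∈ range (m + 1), conjPart a (i + 1) ^ 2 ≤ T ^ 2 + a.length ^ 2 := by
    rw [sum_range_succ', conjPart_one h.2.1]
    gcongr
    exact sum_sq_le_sq_sum_of_nonneg fun _ _ => Nat.zero_le _
  have hsplitQ : (T : ℚ) + a.length = m + 1 := by exact_mod_cast hsplit
  have hsqQ : ∑ i ∈ range (m + 1), (conjPart a (i + 1) : ℚ) ^ 2 ≤ (T : ℚ) ^ 2 + a.length ^ 2 := by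
    exact_mod_cast hsq
  rw [Dhalf]
  push_cast
  rw [← hsplitQ]
  linarith

end IsPartitionOf

lemma exists_two_mul_le_sum {ι : Type*} [DecidableEq ι] {t : Finset ι} {f : ι → ℚ}
    (hf : ∀ i ∈ t, 0 ≤ f i) {j₀ j₁ : ι} (hj₀ : j₀ ∈ t) (hj₁ : j₁ ∈ t) (hj : j₀ ≠ j₁) :
    ∃ j ∈ t, 2 * f j ≤ ∑ i ∈ t, f i := by
  have hpair : f j₀ + f j₁ ≤ ∑ i ∈ t, f i := by
    rw [← sum_pair hj]
    exact sum_le_sum_of_subset_of_nonneg (by simp [insert_subset_iff, hj₀, hj₁])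
      fun i hi _ => hf i hi
  rcases le_total (f j₀) (f j₁) with h | h
  · exact ⟨j₀, hj₀, by linarith⟩
  · exact ⟨j₁, hj₁, by linarith⟩

lemma mul_sub_one_div_two_lt_add_sum {ι : Type*} [DecidableEq ι] {n dl Dl : ℚ}
    {t : Finset ι} {d D : ι → ℚ} {j₀ j₁ : ι} (hj₀ : j₀ ∈ t) (hj₁ : j₁ ∈ t) (hj : j₀ ≠ j₁)
    (hd : ∀ i ∈ t, 1 ≤ d i) (hD_half : ∀ i ∈ t, n * d i / 2 ≤ D i)
    (hD_mul : ∀ i ∈ t, d i * (n - d i) ≤ D i) (hn : 1 ≤ n) (hdl : 0 ≤ dl)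
    (hDl : (n - 1) * dl / 2 ≤ Dl) (hsum : n - 1 ≤ dl + ∑ i ∈ t, d i) :
    n * (n - 1) / 2 < Dl + ∑ i ∈ t, D i := by
  have hrest : ∀ u ⊆ t, n / 2 * ∑ i ∈ u, d i ≤ ∑ i ∈ u, D i := fun u hu => by
    rw [mul_sum]
    exact sum_le_sum fun i hi => by linarith [hD_half i (hu hi)]
  set s := ∑ i ∈ t, d i
  by_cases hs : n - 1 < s
  · have hDl₀ : 0 ≤ Dl := (div_nonneg (mul_nonneg (sub_nonneg.2 hn) hdl) zero_le_two).trans hDl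
    linarith [hrest t subset_rfl, mul_pos (by linarith : 0 < n) (by linarith : 0 < s - (n - 1))]
  obtain ⟨j, hj, h2j⟩ :=
    exists_two_mul_le_sum (f := d) (fun i hi => by linarith [hd i hi]) hj₀ hj₁ hj
  have hDt : d j * (n - d j) + n / 2 * (s - d j) ≤ ∑ i ∈ t, D i := by
    have hds : s - d j = ∑ i ∈ t.erase j, d i := sub_eq_of_eq_add' (add_sum_erase _ _ hj).symm
    rw [hds, ← add_sum_erase _ _ hj]
    linarith [hD_mul j hj, hrest (t.erase j) (erase_subset _ _)]
  have hDl' : (n - 1) * (n - 1 - s) / 2 ≤ Dl := by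
    linarith [mul_nonneg (by linarith : 0 ≤ n - 1) (by linarith : 0 ≤ dl - (n - 1 - s))]
  -- with x = d j the slack is (x - 1)(n - 1 - 2x)/2 + x/2 + (s - 2x)/2
  linarith [mul_nonneg (by linarith [hd j hj] : 0 ≤ d j - 1) (by linarith : 0 ≤ n - 1 - 2 * d j),
    hd j hj]

theorem stmt9 (n k : ℕ) (hn : 2 ≤ n) (hk : 3 ≤ k) (A : Fin k → List ℕ)
    (hpart : ∀ i : Fin k, IsPartitionOf (if i.val + 1 = k then n - 1 else n) (A i))
    (hnontriv : ∀ i : Fin k, i.val + 1 ≠ k → A i ≠ List.replicate n 1)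
    (hsum : (n : ℤ) - 1 ≤ ∑ i : Fin k, (((A i).sum : ℤ) - (A i).length)) :
    (n : ℚ) * ((n : ℚ) - 1) / 2
      < ∑ i : Fin k, Dhalf (if i.val + 1 = k then n - 1 else n) (A i) := by
  let last : Fin k := ⟨k - 1, by omega⟩
  have hlast : ∀ i : Fin k, i.val + 1 = k ↔ i = last := fun i => by simp [last, Fin.ext_iff]; omega
  have hpart_ne : ∀ i ∈ univ.erase last, IsPartitionOf n (A i) := fun i hi => by
    simpa [hlast, ne_of_mem_erase hi] using hpart i
  have hpart_last : IsPartitionOf (n - 1) (A last) := by simpa [hlast] using hpart last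
  have hcast : ((n - 1 : ℕ) : ℚ) = n - 1 := by rw [Nat.cast_sub (by omega), Nat.cast_one]
  have hsumQ : (n : ℚ) - 1 ≤ ∑ i : Fin k, (((A i).sum : ℚ) - (A i).length) := by
    exact_mod_cast hsum
  rw [← add_sum_erase _ _ (mem_univ last), hpart_last.2.2, hcast,
    sum_congr rfl fun i hi => by rw [(hpart_ne i hi).2.2]] at hsumQ
  rw [← add_sum_erase _ _ (mem_univ last), if_pos ((hlast last).2 rfl),
    sum_congr rfl fun i hi => by rw [if_neg (by simpa [hlast] using ne_of_mem_erase hi)]]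
  refine mul_sub_one_div_two_lt_add_sum (j₀ := ⟨0, by omega⟩) (j₁ := ⟨1, by omega⟩)
    (by simp [last, Fin.ext_iff]; omega) (by simp [last, Fin.ext_iff]; omega) (by simp)
    (fun i hi => ?_) (fun i hi => (hpart_ne i hi).mul_sub_length_div_two_le_Dhalf)
    (fun i hi => ?_) (by exact_mod_cast hn.trans' one_le_two) ?_
    (hcast ▸ hpart_last.mul_sub_length_div_two_le_Dhalf) hsumQ
  · have := (hpart_ne i hi).length_lt (hnontriv i (by simpa [hlast] using ne_of_mem_erase hi))
    rw [le_sub_iff_add_le']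
    exact_mod_cast this
  · convert (hpart_ne i hi).length_mul_sub_length_le_Dhalf using 1
    ring
  · rw [← hcast, sub_nonneg]
    exact_mod_cast hpart_last.length_le
end
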